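/- In the CDGA of Theorem 2 with general perturbation dm = Σ_{i=1}^{2k-1} xᵢnᵢ + p, p ∈ Λ²⟨x₁,…,x_{2k+1}⟩ with coefficient t := t_{2k,2k+1} of x_{2k}x_{2k+1}: if t ≠ 0 then the CDGA is isomorphic to the model with dm = Σᵢ xᵢnᵢ + x_{2k}x_{2k+1}, via first the shift f(nⱼ) = nⱼ - Σ_{i>j} t_{j,i}xᵢ and then the rescaling x_{2k+1} ↦ (1/t)x_{2k+1}. -/

import Mathlib

/-!
Write the perturbation as `p = Σ_a x_a y_a` with `y_a = Σ_{b>a} t_{a,b} x_b`. The shift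
`n_j ↦ n_j - y_j` is an automorphism (it only adds `x`'s to `n`'s, so it is `1 - L` with
`L² = 0`), and it turns `Σ_j x_j n_j + p` into `Σ_j x_j n_j + x_{2k} y_{2k} + x_{2k+1} y_{2k+1}
= Σ_j x_j n_j + t x_{2k} x_{2k+1}`; rescaling `x_{2k+1}` by `1/t` then removes `t`.
An automorphism of the exterior algebra induced by a linear automorphism of the generators
commutes with the grading involution, so by the graded Leibniz rule it intertwines two
differentials as soon as it does so on generators.
-/

noncomputable section

/-- Index type for the degree-1 generators `x₁,…,x_{2k+1}, n₁,…,n_{2k-1}, m`. -/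
abbrev Jk (k : ℕ) := Fin (2 * k + 1) ⊕ Fin (2 * k - 1) ⊕ Unit

/-- The free graded-commutative algebra on these degree-1 generators, modelled as the
exterior algebra of `ℝ^{Jk k}`. -/
abbrev Lk (k : ℕ) := ExteriorAlgebra ℝ (Jk k → ℝ)

def X (k : ℕ) (i : Fin (2 * k + 1)) : Lk k :=
  ExteriorAlgebra.ι ℝ (Pi.single (Sum.inl i) 1)

def N (k : ℕ) (j : Fin (2 * k - 1)) : Lk k :=
  ExteriorAlgebra.ι ℝ (Pi.single (Sum.inr (Sum.inl j)) 1)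

def M (k : ℕ) : Lk k := ExteriorAlgebra.ι ℝ (Pi.single (Sum.inr (Sum.inr ())) 1)

def f1 (k : ℕ) (j : Fin (2 * k - 1)) : Fin (2 * k + 1) := ⟨j.1, by have := j.2; omega⟩

def f2 (k : ℕ) (j : Fin (2 * k - 1)) : Fin (2 * k + 1) :=
  ⟨j.1 + 1, by have := j.2; omega⟩

/-- `x_{2k}` (0-based index `2k-1`). -/
def x2k (k : ℕ) : Fin (2 * k + 1) := ⟨2 * k - 1, by omega⟩

/-- `x_{2k+1}` (0-based index `2k`). -/
def x2k1 (k : ℕ) : Fin (2 * k + 1) := ⟨2 * k, by omega⟩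

namespace ExteriorAlgebra

variable {R V W : Type*} [CommRing R] [AddCommGroup V] [Module R V] [AddCommGroup W] [Module R W]

def congr (e : V ≃ₗ[R] W) : ExteriorAlgebra R V ≃ₐ[R] ExteriorAlgebra R W :=
  AlgEquiv.ofAlgHom (map e) (map e.symm)
    (by rw [map_comp_map, e.comp_symm, map_id])
    (by rw [map_comp_map, e.symm_comp, map_id])

theorem congr_ι (e : V ≃ₗ[R] W) (m : V) : congr e (ι R m) = ι R (e m) :=
  map_apply_ι _ _

theorem map_involute (f : V →ₗ[R] W) (x : ExteriorAlgebra R V) :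
    map f (CliffordAlgebra.involute x) = CliffordAlgebra.involute (map f x) := by
  have : (map f).comp CliffordAlgebra.involute = CliffordAlgebra.involute.comp (map f) :=
    hom_ext <| LinearMap.ext fun m => by simp [map_apply_ι]
  exact AlgHom.congr_fun this x

theorem leibniz_of_ι {d : ExteriorAlgebra R V →ₗ[R] ExteriorAlgebra R V} (hone : d 1 = 0)
    (hleib : ∀ v y, d (ι R v * y) = d (ι R v) * y - ι R v * d y) (a b : ExteriorAlgebra R V) :
    d (a * b) = d a * b + CliffordAlgebra.involute a * d b := by
  induction a using ExteriorAlgebra.induction generalizing b with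
  | algebraMap r =>
    simp [Algebra.algebraMap_eq_smul_one, hone]
  | ι v => rw [hleib, CliffordAlgebra.involute_ι, neg_mul, sub_eq_add_neg]
  | mul x y hx hy =>
    rw [mul_assoc, hx, hy, hx y, map_mul]
    noncomm_ring
  | add x y hx hy =>
    rw [add_mul, map_add, map_add, map_add, hx, hy]
    noncomm_ring

theorem congr_involute (e : V ≃ₗ[R] W) (x : ExteriorAlgebra R V) :
    congr e (CliffordAlgebra.involute x) = CliffordAlgebra.involute (congr e x) :=
  map_involute _ x

theorem intertwines_of_basis {I : Type*} (b : Module.Basis I R V)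
    (F : ExteriorAlgebra R V →ₐ[R] ExteriorAlgebra R W)
    (hF : ∀ x, F (CliffordAlgebra.involute x) = CliffordAlgebra.involute (F x))
    {d : ExteriorAlgebra R V →ₗ[R] ExteriorAlgebra R V}
    {d' : ExteriorAlgebra R W →ₗ[R] ExteriorAlgebra R W}
    (hone : d 1 = 0) (hleib : ∀ v y, d (ι R v * y) = d (ι R v) * y - ι R v * d y)
    (hone' : d' 1 = 0) (hleib' : ∀ v y, d' (ι R v * y) = d' (ι R v) * y - ι R v * d' y)
    (hb : ∀ i, F (d (ι R (b i))) = d' (F (ι R (b i)))) (y : ExteriorAlgebra R V) :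
    F (d y) = d' (F y) := by
  have hι : F.toLinearMap ∘ₗ d ∘ₗ ι R = d' ∘ₗ F.toLinearMap ∘ₗ ι R := b.ext hb
  induction y using ExteriorAlgebra.induction with
  | algebraMap r => simp [Algebra.algebraMap_eq_smul_one, hone, hone']
  | ι v => exact LinearMap.congr_fun hι v
  | mul x y hx hy =>
    rw [leibniz_of_ι hone hleib, map_add, map_mul, map_mul, hx, hy, hF, map_mul,
      leibniz_of_ι hone' hleib']
  | add x y hx hy => rw [map_add, map_add, hx, hy, map_add, map_add]

end ExteriorAlgebra

def Module.End.oneSubEquiv {R V : Type*} [Ring R] [AddCommGroup V] [Module R V]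
    (L : Module.End R V) (hL : L * L = 0) : V ≃ₗ[R] V :=
  LinearEquiv.ofLinearMap (1 - L) (1 + L)
    (by rw [← Module.End.mul_eq_comp, ← Module.End.one_eq_id]; simp [sub_mul, mul_add, hL])
    (by rw [← Module.End.mul_eq_comp, ← Module.End.one_eq_id]; simp [add_mul, mul_sub, hL])

theorem Module.End.oneSubEquiv_apply {R V : Type*} [Ring R] [AddCommGroup V] [Module R V]
    (L : Module.End R V) (hL : L * L = 0) (v : V) : oneSubEquiv L hL v = v - L v :=
  rfl

def LinearEquiv.piScale {K ι : Type*} [Field K] (s : ι → K) (hs : ∀ i, s i ≠ 0) :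
    (ι → K) ≃ₗ[K] (ι → K) :=
  LinearEquiv.piCongrRight fun i => LinearEquiv.smulOfNeZero K K (s i) (hs i)

theorem LinearEquiv.piScale_single {K ι : Type*} [Field K] [DecidableEq ι] (s : ι → K)
    (hs : ∀ i, s i ≠ 0) (i : ι) :
    piScale s hs (Pi.single i 1) = s i • Pi.single i 1 := by
  ext j
  by_cases h : j = i
  · subst h; simp [piScale]
  · simp [piScale, h]

namespace Model

variable {k : ℕ}

def shiftOp (c : Fin (2 * k - 1) → Fin (2 * k + 1) → ℝ) : Module.End ℝ (Jk k → ℝ) :=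
  ∑ j, ∑ i, c j i • (LinearMap.proj (Sum.inr (Sum.inl j))).smulRight (Pi.single (Sum.inl i) 1)

variable (c : Fin (2 * k - 1) → Fin (2 * k + 1) → ℝ)

theorem shiftOp_single_inl (i : Fin (2 * k + 1)) : shiftOp c (Pi.single (Sum.inl i) 1) = 0 := by
  simp [shiftOp]

theorem shiftOp_single_m (u : Unit) : shiftOp c (Pi.single (Sum.inr (Sum.inr u)) 1) = 0 := by
  simp [shiftOp]

theorem shiftOp_single_n (j : Fin (2 * k - 1)) :
    shiftOp c (Pi.single (Sum.inr (Sum.inl j)) 1) = ∑ i, c j i • Pi.single (Sum.inl i) 1 := by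
  simp [shiftOp, Pi.single_apply]

theorem shiftOp_mul_self : shiftOp c * shiftOp c = 0 := by
  refine (Pi.basisFun ℝ (Jk k)).ext ?_
  rintro (i | j | u) <;>
    simp [shiftOp_single_inl, shiftOp_single_n, shiftOp_single_m, map_sum]

def shift : Lk k ≃ₐ[ℝ] Lk k :=
  ExteriorAlgebra.congr (Module.End.oneSubEquiv (shiftOp c) (shiftOp_mul_self c))

theorem shift_X (i : Fin (2 * k + 1)) : shift c (X k i) = X k i := by
  rw [X, shift, ExteriorAlgebra.congr_ι, Module.End.oneSubEquiv_apply, shiftOp_single_inl,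
    sub_zero]

theorem shift_N (j : Fin (2 * k - 1)) : shift c (N k j) = N k j - ∑ i, c j i • X k i := by
  simp only [N, X, shift, ExteriorAlgebra.congr_ι, Module.End.oneSubEquiv_apply,
    shiftOp_single_n, map_sub, map_sum, map_smul]

theorem shift_M : shift c (M k) = M k := by
  rw [M, shift, ExteriorAlgebra.congr_ι, Module.End.oneSubEquiv_apply, shiftOp_single_m,
    sub_zero]

def rescaleCoeff (τ : ℝ) : Jk k → ℝ := Function.update 1 (Sum.inl (x2k1 k)) τ⁻¹

theorem rescaleCoeff_ne_zero {τ : ℝ} (hτ : τ ≠ 0) (w : Jk k) : rescaleCoeff τ w ≠ 0 := by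
  unfold rescaleCoeff
  rcases eq_or_ne w (Sum.inl (x2k1 k)) with rfl | hw
  · simpa using hτ
  · simp [hw]

variable {τ : ℝ} (hτ : τ ≠ 0)

def rescale : Lk k ≃ₐ[ℝ] Lk k :=
  ExteriorAlgebra.congr (LinearEquiv.piScale _ (rescaleCoeff_ne_zero (k := k) hτ))

theorem rescale_X (i : Fin (2 * k + 1)) :
    rescale hτ (X k i) = rescaleCoeff τ (Sum.inl i) • X k i := by
  rw [X, rescale, ExteriorAlgebra.congr_ι, LinearEquiv.piScale_single, map_smul]

theorem rescale_X_of_lt (i : Fin (2 * k + 1)) (hi : i.1 < 2 * k) :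
    rescale hτ (X k i) = X k i := by
  rw [rescale_X, rescaleCoeff, Function.update_of_ne, Pi.one_apply, one_smul]
  exact fun h => by simp [x2k1, Fin.ext_iff] at h; omega

theorem rescale_X_x2k1 : rescale hτ (X k (x2k1 k)) = τ⁻¹ • X k (x2k1 k) := by
  rw [rescale_X, rescaleCoeff, Function.update_self]

theorem rescale_N (j : Fin (2 * k - 1)) : rescale hτ (N k j) = N k j := by
  rw [N, rescale, ExteriorAlgebra.congr_ι, LinearEquiv.piScale_single, rescaleCoeff,
    Function.update_of_ne Sum.inr_ne_inl, Pi.one_apply, one_smul]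

theorem rescale_M : rescale hτ (M k) = M k := by
  rw [M, rescale, ExteriorAlgebra.congr_ι, LinearEquiv.piScale_single, rescaleCoeff,
    Function.update_of_ne Sum.inr_ne_inl, Pi.one_apply, one_smul]

theorem val_f1_lt (j : Fin (2 * k - 1)) : (f1 k j).1 < 2 * k := by
  have := j.2
  simp only [f1]
  omega

theorem val_f2_lt (j : Fin (2 * k - 1)) : (f2 k j).1 < 2 * k := by
  have := j.2
  simp only [f2]
  omega

theorem sum_univ_eq_sum_f1_add {A : Type*} [AddCommMonoid A] (hk : 0 < k)
    (g : Fin (2 * k + 1) → A) :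
    ∑ a, g a = ∑ j, g (f1 k j) + g (x2k k) + g (x2k1 k) := by
  have h : 2 * k - 1 + 1 + 1 = 2 * k + 1 := by omega
  have h2k : Fin.cast h (Fin.last _).castSucc = x2k k := rfl
  have h2k1 : Fin.cast h (Fin.last _) = x2k1 k := Fin.ext (by simp [x2k1])
  rw [← Fin.sum_congr' g h, Fin.sum_univ_castSucc, Fin.sum_univ_castSucc, h2k, h2k1]
  rfl

variable (t : Fin (2 * k + 1) → Fin (2 * k + 1) → ℝ)

def tail (a : Fin (2 * k + 1)) : Lk k := ∑ b, (if a.1 < b.1 then t a b else 0) • X k b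

def shiftCoeff (j : Fin (2 * k - 1)) (i : Fin (2 * k + 1)) : ℝ :=
  if (f1 k j).1 < i.1 then t (f1 k j) i else 0

theorem sum_sum_smul_X_mul_X :
    ∑ a, ∑ b, (if a.1 < b.1 then t a b else 0) • (X k a * X k b)
      = ∑ a, X k a * tail t a := by
  simp only [tail, Finset.mul_sum, mul_smul_comm]

theorem tail_x2k1 : tail t (x2k1 k) = 0 :=
  Finset.sum_eq_zero fun b _ => by rw [if_neg (by simp [x2k1]; omega), zero_smul]

theorem tail_x2k (hk : 0 < k) : tail t (x2k k) = t (x2k k) (x2k1 k) • X k (x2k1 k) := by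
  refine (Finset.sum_eq_single (x2k1 k) (fun b _ hb => ?_) (by simp)).trans ?_
  · rw [if_neg, zero_smul]
    have := Fin.val_ne_of_ne hb
    simp only [x2k, x2k1] at this ⊢
    omega
  · rw [if_pos (by simp [x2k, x2k1]; omega)]

theorem shift_tail (a : Fin (2 * k + 1)) :
    shift c (tail t a) = tail t a := by
  simp only [tail, map_sum, map_smul, shift_X]

theorem shift_dm (hk : 0 < k) :
    shift (shiftCoeff t) ((∑ j, X k (f1 k j) * N k j)
        + ∑ a, ∑ b, (if a.1 < b.1 then t a b else 0) • (X k a * X k b))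
      = (∑ j, X k (f1 k j) * N k j) + t (x2k k) (x2k1 k) • (X k (x2k k) * X k (x2k1 k)) := by
  have hN : ∀ j, shift (shiftCoeff t) (N k j) = N k j - tail t (f1 k j) := shift_N _
  rw [sum_sum_smul_X_mul_X, sum_univ_eq_sum_f1_add hk, tail_x2k t hk, tail_x2k1, mul_zero,
    add_zero, mul_smul_comm]
  simp only [map_add, map_sum, map_mul, map_smul, shift_X, hN, shift_tail, mul_sub,
    Finset.sum_sub_distrib]
  abel

variable {t}

theorem rescale_dm (hk : 0 < k) :
    rescale hτ ((∑ j, X k (f1 k j) * N k j) + τ • (X k (x2k k) * X k (x2k1 k)))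
      = (∑ j, X k (f1 k j) * N k j) + X k (x2k k) * X k (x2k1 k) := by
  have hX : ∀ j, rescale hτ (X k (f1 k j)) = X k (f1 k j) := fun j =>
    rescale_X_of_lt hτ _ (val_f1_lt j)
  simp only [map_add, map_sum, map_mul, map_smul, hX, rescale_N,
    rescale_X_of_lt hτ (x2k k) (by simp only [x2k]; omega), rescale_X_x2k1, mul_smul_comm,
    smul_smul, mul_inv_cancel₀ hτ, one_smul]

variable (ht : t (x2k k) (x2k1 k) ≠ 0)

def iso : Lk k ≃ₐ[ℝ] Lk k := (shift (shiftCoeff t)).trans (rescale ht)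

theorem iso_apply (y : Lk k) : iso ht y = rescale ht (shift (shiftCoeff t) y) := rfl

theorem iso_involute (y : Lk k) :
    iso ht (CliffordAlgebra.involute y) = CliffordAlgebra.involute (iso ht y) := by
  rw [iso_apply, shift, rescale, ExteriorAlgebra.congr_involute, ExteriorAlgebra.congr_involute]
  rfl

theorem iso_X_of_lt (i : Fin (2 * k + 1)) (hi : i.1 < 2 * k) : iso ht (X k i) = X k i := by
  rw [iso_apply, shift_X, rescale_X_of_lt ht i hi]

theorem iso_X_x2k1 : iso ht (X k (x2k1 k)) = (t (x2k k) (x2k1 k))⁻¹ • X k (x2k1 k) := by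
  rw [iso_apply, shift_X, rescale_X_x2k1]

theorem iso_X (i : Fin (2 * k + 1)) :
    iso ht (X k i) = rescaleCoeff (t (x2k k) (x2k1 k)) (Sum.inl i) • X k i := by
  rw [iso_apply, shift_X, rescale_X]

theorem iso_N (j : Fin (2 * k - 1)) :
    iso ht (N k j)
      = N k j
        - ∑ i, (shiftCoeff t j i * rescaleCoeff (t (x2k k) (x2k1 k)) (Sum.inl i)) • X k i := by
  simp only [iso_apply, shift_N, map_sub, map_sum, map_smul, rescale_N, rescale_X, smul_smul]

theorem iso_M : iso ht (M k) = M k := by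
  rw [iso_apply, shift_M, rescale_M]

end Model

/-- let `d` be the differential with `dxᵢ = 0`, `dnᵢ = xᵢx_{i+1}` and
`dm = Σᵢ xᵢnᵢ + p` with `p = Σ_{j<i} t_{j,i} xⱼxᵢ`, and suppose the coefficient
`t := t_{2k,2k+1}` of `x_{2k}x_{2k+1}` is nonzero.  Then the CDGA is isomorphic to the
model of Theorem B(2) (differential `d'` with `d'm = Σᵢ xᵢnᵢ + x_{2k}x_{2k+1}`), via a
shift of the `nⱼ` by linear combinations of the `x`'s followed by the rescaling
`x_{2k+1} ↦ (1/t)·x_{2k+1}`. -/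
theorem stmt13 (k : ℕ) (hk : 2 ≤ k) (t : Fin (2 * k + 1) → Fin (2 * k + 1) → ℝ)
    (ht : t (x2k k) (x2k1 k) ≠ 0)
    (d d' : Lk k →ₗ[ℝ] Lk k)
    (hleib : ∀ (v : Jk k → ℝ) (y : Lk k),
      d (ExteriorAlgebra.ι ℝ v * y)
        = d (ExteriorAlgebra.ι ℝ v) * y - ExteriorAlgebra.ι ℝ v * d y)
    (hleib' : ∀ (v : Jk k → ℝ) (y : Lk k),
      d' (ExteriorAlgebra.ι ℝ v * y)
        = d' (ExteriorAlgebra.ι ℝ v) * y - ExteriorAlgebra.ι ℝ v * d' y)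
    (hone : d 1 = 0) (hone' : d' 1 = 0)
    (hx : ∀ i, d (X k i) = 0) (hx' : ∀ i, d' (X k i) = 0)
    (hn : ∀ j, d (N k j) = X k (f1 k j) * X k (f2 k j))
    (hn' : ∀ j, d' (N k j) = X k (f1 k j) * X k (f2 k j))
    (hm : d (M k) = (∑ j : Fin (2 * k - 1), X k (f1 k j) * N k j)
        + ∑ a : Fin (2 * k + 1), ∑ b : Fin (2 * k + 1),
            (if a.1 < b.1 then t a b else 0) • (X k a * X k b))
    (hm' : d' (M k) = (∑ j : Fin (2 * k - 1), X k (f1 k j) * N k j)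
        + X k (x2k k) * X k (x2k1 k)) :
    ∃ f : Lk k ≃ₐ[ℝ] Lk k,
      (∀ i : Fin (2 * k + 1), i.1 < 2 * k → f (X k i) = X k i) ∧
      f (X k (x2k1 k)) = (t (x2k k) (x2k1 k))⁻¹ • X k (x2k1 k) ∧
      f (M k) = M k ∧
      (∀ j : Fin (2 * k - 1), ∃ c : Fin (2 * k + 1) → ℝ,
        f (N k j) = N k j - ∑ i : Fin (2 * k + 1), c i • X k i) ∧
      ∀ y : Lk k, f (d y) = d' (f y) := by
  have hk₀ : 0 < k := by omega
  refine ⟨Model.iso ht, Model.iso_X_of_lt ht, Model.iso_X_x2k1 ht, Model.iso_M ht,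
    fun j => ⟨_, Model.iso_N ht j⟩,
    ExteriorAlgebra.intertwines_of_basis (Pi.basisFun ℝ (Jk k))
      (Model.iso ht : Lk k →ₐ[ℝ] Lk k) (Model.iso_involute ht) hone hleib hone' hleib' ?_⟩
  simp only [Pi.basisFun_apply]
  rintro (i | j | u)
  · change Model.iso ht (d (X k i)) = d' (Model.iso ht (X k i))
    rw [hx, map_zero, Model.iso_X, map_smul, hx', smul_zero]
  · change Model.iso ht (d (N k j)) = d' (Model.iso ht (N k j))
    rw [hn, map_mul, Model.iso_X_of_lt ht _ (Model.val_f1_lt j),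
      Model.iso_X_of_lt ht _ (Model.val_f2_lt j), Model.iso_N, map_sub, hn', map_sum]
    simp only [map_smul, hx', smul_zero, Finset.sum_const_zero, sub_zero]
  · change Model.iso ht (d (M k)) = d' (Model.iso ht (M k))
    rw [Model.iso_M, hm, hm', Model.iso_apply, Model.shift_dm t hk₀, Model.rescale_dm ht hk₀]
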